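/- Let ε > 0 and u > 0 be such that λ(B(1, u, ε)) > 0. Then there exists a unique s* ∈ (0,1) with λ(B(s*, u, ε)) = 0, and there exists a unique x* ∈ (0,∞)^n satisfying B(s*, u, ε) x* = 0 and Σ_{j=1}^n x*_j + s* = 1. Moreover, the only steady states of (S) in ℝ_+^n × [0,1] are the washout E_wo = (0,…,0,1) and the coexistence point (x*, s*). -/

import Mathlib

open Matrix Filter Set Topology Asymptotics

noncomputable section

/-- The mutation matrix `T` (discrete Neumann Laplacian): `T i j = 1` if `|i-j| = 1`,
diagonal entries `-1` at the ends and `-2` inside (minus number of neighbors), `0` otherwise. -/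
def mutT (n : ℕ) : Matrix (Fin n) (Fin n) ℝ :=
  Matrix.of fun i j =>
    if ((i : ℕ) + 1 = (j : ℕ) ∨ (j : ℕ) + 1 = (i : ℕ)) then 1
    else if i = j then
      -((if 0 < (i : ℕ) then (1 : ℝ) else 0) + (if (i : ℕ) + 1 < n then (1 : ℝ) else 0))
    else 0

/-- Monod kinetics `μ(s) = m s / (a + s)`. -/
def monod (m a s : ℝ) : ℝ := m * s / (a + s)

/-- The largest eigenvalue of a (symmetric) real matrix. -/
def maxEig {n : ℕ} (A : Matrix (Fin n) (Fin n) ℝ) : ℝ :=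
  sSup {t : ℝ | ∃ v : Fin n → ℝ, v ≠ 0 ∧ A.mulVec v = t • v}

/-- The matrix `B(s,u,ε) = diag(μ₁(s),…,μₙ(s)) - u Iₙ + ε T`. -/
def Bmat (n : ℕ) (m a : Fin n → ℝ) (s u ε : ℝ) : Matrix (Fin n) (Fin n) ℝ :=
  Matrix.diagonal (fun i => monod (m i) (a i) s) - u • (1 : Matrix (Fin n) (Fin n) ℝ)
    + ε • mutT n

/-- `(x, s)` is a solution of the chemostat system with mutation (S). -/
def IsSol (n : ℕ) (m a : Fin n → ℝ) (ε u : ℝ) (x : ℝ → Fin n → ℝ) (s : ℝ → ℝ) : Prop :=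
  ∀ t : ℝ, 0 ≤ t →
    (∀ i, HasDerivAt (fun τ => x τ i)
        ((monod (m i) (a i) (s t) - u) * x t i + ε * (mutT n).mulVec (x t) i) t) ∧
    HasDerivAt s (-(∑ j, monod (m j) (a j) (s t) * x t j) + u * (1 - s t)) t

/-- Admissible initial conditions `D = (ℝ₊ⁿ \ {0}) × [0,1]`. -/
def InD (n : ℕ) (x0 : Fin n → ℝ) (s0 : ℝ) : Prop :=
  (∀ i, 0 ≤ x0 i) ∧ x0 ≠ 0 ∧ s0 ∈ Set.Icc (0 : ℝ) 1

/-- `(x, s)` is a steady state of (S). -/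
def IsSteady (n : ℕ) (m a : Fin n → ℝ) (ε u : ℝ) (x : Fin n → ℝ) (s : ℝ) : Prop :=
  (Bmat n m a s u ε).mulVec x = 0 ∧ ∑ j, monod (m j) (a j) s * x j = u * (1 - s)

/-!
The map `s ↦ λ(B(s))` is continuous and strictly increasing on `[0, ∞)`, because `B(s)` moves
by a diagonal matrix whose entries `μᵢ(s) - μᵢ(s')` are positive for `s > s'`. At `s = 0` the
constant vector is a positive eigenvector of `B(0) = -u I + ε T` for `-u`, and for a symmetric
matrix with nonnegative off-diagonal entries a positive eigenvector can only belong to the top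
eigenvalue (pair it with a nonnegative top eigenvector, which exists since replacing `v` by `|v|`
does not decrease the Rayleigh quotient). So `λ(B(0)) = -u < 0 < λ(B(1))`, and the intermediate
value theorem gives the unique root `s*`.

`B(s)` is tridiagonal with positive off-diagonal band, so a nonnegative vector in its kernel
vanishing at one index vanishes everywhere. Hence the top eigenvector at `s*` is positive, and by
the minimal-ratio trick it spans the kernel. Since the columns of `T` sum to zero, summing the
steady-state equations gives `∑ xⱼ + s = 1`; a nonzero steady state is then a positive kernel
vector of `B(s)`, which forces `λ(B(s)) = 0`, i.e. `s = s*`, and `x = x*`.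
-/

theorem Fin.iff_of_forall_castSucc_iff_succ {N : ℕ} {p : Fin (N + 1) → Prop}
    (h : ∀ k : Fin N, p k.castSucc ↔ p k.succ) (i j : Fin (N + 1)) : p i ↔ p j := by
  have h0 : ∀ i, p i ↔ p 0 := fun i =>
    Fin.induction Iff.rfl (fun k ih => (h k).symm.trans ih) i
  rw [h0 i, h0 j]

namespace Matrix

variable {n : ℕ} {A : Matrix (Fin n) (Fin n) ℝ}

theorem setOf_mulVec_eq_smul_eq_spectrum (A : Matrix (Fin n) (Fin n) ℝ) :
    {t : ℝ | ∃ v : Fin n → ℝ, v ≠ 0 ∧ A *ᵥ v = t • v} = spectrum ℝ A := by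
  ext t
  rw [Set.mem_ofPred_eq, ← spectrum_toLin', ← Module.End.hasEigenvalue_iff_mem_spectrum,
    Module.End.hasEigenvalue_iff, Submodule.ne_bot_iff]
  simp only [Module.End.mem_eigenspace_iff, toLin'_apply, and_comm]

theorem maxEig_eq_sSup_spectrum (A : Matrix (Fin n) (Fin n) ℝ) :
    maxEig A = sSup (spectrum ℝ A) := by
  rw [maxEig, setOf_mulVec_eq_smul_eq_spectrum]

theorem dotProduct_diagonal_mulVec (d v : Fin n → ℝ) :
    v ⬝ᵥ diagonal d *ᵥ v = ∑ i, d i * (v i * v i) := by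
  simp only [dotProduct, mulVec_diagonal]
  exact Finset.sum_congr rfl fun i _ => by ring

theorem dotProduct_mulVec_eq_sum (A : Matrix (Fin n) (Fin n) ℝ) (v : Fin n → ℝ) :
    v ⬝ᵥ A *ᵥ v = ∑ i, ∑ j, A i j * (v i * v j) := by
  simp only [dotProduct, mulVec, Finset.mul_sum]
  exact Finset.sum_congr rfl fun i _ => Finset.sum_congr rfl fun j _ => by ring

theorem dotProduct_mulVec_le_abs (hA : Pairwise fun i j => 0 ≤ A i j) (v : Fin n → ℝ) :
    v ⬝ᵥ A *ᵥ v ≤ |v| ⬝ᵥ A *ᵥ |v| := by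
  simp only [dotProduct_mulVec_eq_sum, Pi.abs_apply, ← abs_mul]
  refine Finset.sum_le_sum fun i _ => Finset.sum_le_sum fun j _ => ?_
  rcases eq_or_ne i j with rfl | hij
  · rw [abs_mul_self]
  · exact mul_le_mul_of_nonneg_left (le_abs_self _) (hA hij)

theorem eq_zero_of_mulVec_apply_eq_zero (hA : Pairwise fun i j => 0 ≤ A i j) {x : Fin n → ℝ}
    (hx : 0 ≤ x) {i j : Fin n} (hAx : (A *ᵥ x) i = 0) (hxi : x i = 0) (hij : 0 < A i j) :
    x j = 0 := by
  have hterm : ∀ k ∈ Finset.univ, 0 ≤ A i k * x k := fun k _ => by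
    rcases eq_or_ne i k with rfl | hik
    · rw [hxi, mul_zero]
    · exact mul_nonneg (hA hik) (hx k)
  have hAij := (Finset.sum_eq_zero_iff_of_nonneg hterm).1 hAx j (Finset.mem_univ _)
  exact (mul_eq_zero.1 hAij).resolve_left hij.ne'

namespace IsHermitian

theorem maxEig_mem_spectrum [NeZero n] (hA : A.IsHermitian) : maxEig A ∈ spectrum ℝ A := by
  rw [maxEig_eq_sSup_spectrum, hA.spectrum_real_eq_range_eigenvalues]
  exact (Set.range_nonempty _).csSup_mem (Set.finite_range _)

theorem le_maxEig (hA : A.IsHermitian) {t : ℝ} (ht : t ∈ spectrum ℝ A) : t ≤ maxEig A := by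
  rw [maxEig_eq_sSup_spectrum]
  rw [hA.spectrum_real_eq_range_eigenvalues] at ht ⊢
  exact le_csSup (Set.finite_range _).bddAbove ht

theorem exists_mulVec_eq_maxEig_smul [NeZero n] (hA : A.IsHermitian) :
    ∃ v : Fin n → ℝ, v ≠ 0 ∧ A *ᵥ v = maxEig A • v := by
  have h := hA.maxEig_mem_spectrum
  rwa [← setOf_mulVec_eq_smul_eq_spectrum] at h

open scoped MatrixOrder in
theorem posSemidef_maxEig_smul_one_sub (hA : A.IsHermitian) :
    (maxEig A • (1 : Matrix (Fin n) (Fin n) ℝ) - A).PosSemidef := by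
  rw [← Algebra.algebraMap_eq_smul_one, ← le_iff]
  exact (le_algebraMap_iff_spectrum_le hA.isSelfAdjoint).2 fun t ht => hA.le_maxEig ht

theorem dotProduct_mulVec_le_maxEig_mul (hA : A.IsHermitian) (v : Fin n → ℝ) :
    v ⬝ᵥ A *ᵥ v ≤ maxEig A * (v ⬝ᵥ v) := by
  have h := hA.posSemidef_maxEig_smul_one_sub.dotProduct_mulVec_nonneg v
  simp only [star_trivial, sub_mulVec, smul_mulVec, one_mulVec, dotProduct_sub,
    dotProduct_smul, smul_eq_mul] at h
  linarith

theorem mulVec_eq_maxEig_smul_of_dotProduct_mulVec_eq (hA : A.IsHermitian) {v : Fin n → ℝ}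
    (h : v ⬝ᵥ A *ᵥ v = maxEig A * (v ⬝ᵥ v)) : A *ᵥ v = maxEig A • v := by
  have h0 := (hA.posSemidef_maxEig_smul_one_sub.dotProduct_mulVec_zero_iff v).1 (by
    simp only [star_trivial, sub_mulVec, smul_mulVec, one_mulVec, dotProduct_sub,
      dotProduct_smul, smul_eq_mul, h, sub_self])
  rw [sub_mulVec, smul_mulVec, one_mulVec, sub_eq_zero] at h0
  exact h0.symm

theorem maxEig_add_diagonal_le [NeZero n] (hA : A.IsHermitian) {d : Fin n → ℝ} {c : ℝ}
    (hd : ∀ i, d i ≤ c) : maxEig (A + diagonal d) ≤ maxEig A + c := by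
  obtain ⟨v, hv, hAv⟩ := (hA.add (isHermitian_diagonal d)).exists_mulVec_eq_maxEig_smul
  have hvv : 0 < v ⬝ᵥ v := by simpa using dotProduct_star_self_pos_iff.2 hv
  have hdv : ∑ i, d i * (v i * v i) ≤ c * (v ⬝ᵥ v) := by
    rw [dotProduct, Finset.mul_sum]
    exact Finset.sum_le_sum fun i _ => mul_le_mul_of_nonneg_right (hd i) (mul_self_nonneg _)
  have hq : maxEig (A + diagonal d) * (v ⬝ᵥ v) = v ⬝ᵥ A *ᵥ v + ∑ i, d i * (v i * v i) := by
    rw [← dotProduct_diagonal_mulVec, ← dotProduct_add, ← add_mulVec, hAv, dotProduct_smul,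
      smul_eq_mul]
  nlinarith [hA.dotProduct_mulVec_le_maxEig_mul v]

theorem maxEig_lt_add_diagonal [NeZero n] (hA : A.IsHermitian) {d : Fin n → ℝ}
    (hd : ∀ i, 0 < d i) : maxEig A < maxEig (A + diagonal d) := by
  obtain ⟨v, hv, hAv⟩ := hA.exists_mulVec_eq_maxEig_smul
  obtain ⟨i, hi⟩ := Function.ne_iff.1 hv
  have hdv : 0 < ∑ i, d i * (v i * v i) :=
    Finset.sum_pos' (fun j _ => mul_nonneg (hd j).le (mul_self_nonneg _))
      ⟨i, Finset.mem_univ _, mul_pos (hd i) (mul_self_pos.2 hi)⟩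
  have hq : v ⬝ᵥ (A + diagonal d) *ᵥ v = maxEig A * (v ⬝ᵥ v) + ∑ i, d i * (v i * v i) := by
    rw [add_mulVec, dotProduct_add, hAv, dotProduct_smul, smul_eq_mul,
      dotProduct_diagonal_mulVec]
  have hvv : 0 < v ⬝ᵥ v := by simpa using dotProduct_star_self_pos_iff.2 hv
  nlinarith [(hA.add (isHermitian_diagonal d)).dotProduct_mulVec_le_maxEig_mul v]

theorem lipschitzWith_maxEig_add_diagonal [NeZero n] (hA : A.IsHermitian) :
    LipschitzWith 1 fun d => maxEig (A + diagonal d) := by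
  have hle : ∀ d d' : Fin n → ℝ,
      maxEig (A + diagonal d) ≤ maxEig (A + diagonal d') + ‖d - d'‖ := fun d d' => by
      have h := (hA.add (isHermitian_diagonal d')).maxEig_add_diagonal_le
        fun i => (le_abs_self _).trans (norm_le_pi_norm (d - d') i)
      simpa only [add_assoc, diagonal_add, Pi.sub_apply, add_sub_cancel] using h
  refine LipschitzWith.of_dist_le_mul fun d d' => ?_
  rw [NNReal.coe_one, one_mul, Real.dist_eq, dist_eq_norm, abs_sub_le_iff]
  constructor
  · linarith [hle d d']
  · linarith [hle d' d, norm_sub_rev d d']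

theorem exists_nonneg_mulVec_eq_maxEig_smul [NeZero n] (hA : A.IsHermitian)
    (hoff : Pairwise fun i j => 0 ≤ A i j) :
    ∃ v : Fin n → ℝ, v ≠ 0 ∧ 0 ≤ v ∧ A *ᵥ v = maxEig A • v := by
  obtain ⟨w, hw, hAw⟩ := hA.exists_mulVec_eq_maxEig_smul
  refine ⟨|w|, by simpa using hw, abs_nonneg w,
    hA.mulVec_eq_maxEig_smul_of_dotProduct_mulVec_eq ?_⟩
  have habs : |w| ⬝ᵥ |w| = w ⬝ᵥ w := by
    simp only [dotProduct, Pi.abs_apply, abs_mul_abs_self]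
  have hw' : w ⬝ᵥ A *ᵥ w = maxEig A * (w ⬝ᵥ w) := by rw [hAw, dotProduct_smul, smul_eq_mul]
  refine le_antisymm (hA.dotProduct_mulVec_le_maxEig_mul _) ?_
  rw [habs, ← hw']
  exact dotProduct_mulVec_le_abs hoff w

theorem maxEig_eq_of_pos_mulVec_eq_smul [NeZero n] (hA : A.IsHermitian)
    (hoff : Pairwise fun i j => 0 ≤ A i j) {x : Fin n → ℝ} {t : ℝ} (hx : ∀ i, 0 < x i)
    (hAx : A *ᵥ x = t • x) : maxEig A = t := by
  obtain ⟨v, hv, hv0, hAv⟩ := hA.exists_nonneg_mulVec_eq_maxEig_smul hoff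
  obtain ⟨i, hi⟩ := Function.ne_iff.1 hv
  have hxv : 0 < x ⬝ᵥ v := Finset.sum_pos' (fun j _ => mul_nonneg (hx j).le (hv0 j))
    ⟨i, Finset.mem_univ _, mul_pos (hx i) ((hv0 i).lt_of_ne' hi)⟩
  have hsymm : x ⬝ᵥ A *ᵥ v = A *ᵥ x ⬝ᵥ v := by
    rw [dotProduct_mulVec, ← mulVec_transpose, ← conjTranspose_eq_transpose_of_trivial, hA]
  rw [hAv, hAx, dotProduct_smul, smul_dotProduct, smul_eq_mul, smul_eq_mul] at hsymm
  exact mul_right_cancel₀ hxv.ne' hsymm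

end IsHermitian

end Matrix

section Mutation

variable {n : ℕ}

theorem mutT_isHermitian (n : ℕ) : (mutT n).IsHermitian := by
  ext i j
  simp only [conjTranspose_apply, star_trivial, mutT, of_apply]
  rcases eq_or_ne j i with rfl | h
  · rfl
  · simp only [if_neg h, if_neg h.symm, or_comm]

theorem mutT_apply_nonneg : Pairwise fun i j : Fin n => 0 ≤ mutT n i j := by
  intro i j hij
  simp only [mutT, of_apply, if_neg hij]
  split_ifs <;> norm_num

theorem mutT_castSucc_succ {N : ℕ} (k : Fin N) : mutT (N + 1) k.castSucc k.succ = 1 := by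
  simp [mutT]

theorem mutT_succ_castSucc {N : ℕ} (k : Fin N) : mutT (N + 1) k.succ k.castSucc = 1 := by
  simp [mutT]

theorem sum_mutT_apply (i : Fin n) : ∑ j, mutT n i j = 0 := by
  have hrow : ∀ j : Fin n, mutT n i j =
      (if (j : ℕ) = i + 1 then 1 else 0) +
        (if (j : ℕ) = i - 1 then if 0 < (i : ℕ) then 1 else 0 else 0) -
        if (j : ℕ) = i then
          (if 0 < (i : ℕ) then 1 else 0) + (if (i : ℕ) + 1 < n then 1 else 0) else 0 := by
    intro j
    simp only [mutT, of_apply, ← Fin.val_inj]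
    split_ifs <;> first | omega | ring
  simp only [hrow, Finset.sum_add_distrib, Finset.sum_sub_distrib]
  rw [Fin.sum_univ_eq_sum_range (fun k => if k = (i : ℕ) + 1 then (1 : ℝ) else 0),
    Fin.sum_univ_eq_sum_range
      (fun k => if k = (i : ℕ) - 1 then if 0 < (i : ℕ) then (1 : ℝ) else 0 else 0),
    Fin.sum_univ_eq_sum_range (fun k => if k = (i : ℕ) then
      (if 0 < (i : ℕ) then (1 : ℝ) else 0) + (if (i : ℕ) + 1 < n then 1 else 0) else 0)]
  simp only [Finset.sum_ite_eq', Finset.mem_range]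
  have := i.isLt
  split_ifs <;> first | omega | ring

theorem mutT_mulVec_one : mutT n *ᵥ 1 = 0 := by
  ext i
  simp only [mulVec, dotProduct, Pi.one_apply, mul_one, sum_mutT_apply, Pi.zero_apply]

theorem sum_mutT_mulVec (x : Fin n → ℝ) : ∑ i, (mutT n *ᵥ x) i = 0 := by
  have h := dotProduct_mulVec 1 (mutT n) x
  rw [← mulVec_transpose, ← conjTranspose_eq_transpose_of_trivial, mutT_isHermitian,
    mutT_mulVec_one, zero_dotProduct] at h
  simpa [dotProduct] using h

end Mutation

theorem monod_zero (m a : ℝ) : monod m a 0 = 0 := by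
  simp [monod]

theorem monod_strictMonoOn {m a : ℝ} (hm : 0 < m) (ha : 0 < a) :
    StrictMonoOn (monod m a) (Ici 0) := by
  intro s hs t ht hst
  simp only [Set.mem_Ici] at hs ht
  simp only [monod]
  rw [div_lt_div_iff₀ (by linarith) (by linarith)]
  nlinarith [mul_pos (mul_pos hm ha) (sub_pos.2 hst)]

theorem monod_continuousOn {m a : ℝ} (ha : 0 < a) : ContinuousOn (monod m a) (Ici 0) :=
  (continuousOn_const.mul continuousOn_id).div (continuousOn_const.add continuousOn_id)
    fun s hs => by simp only [Set.mem_Ici] at hs; linarith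

section Chemostat

variable {n : ℕ} {m a : Fin n → ℝ} {s u ε : ℝ}

theorem Bmat_eq_add_diagonal :
    Bmat n m a s u ε = (ε • mutT n - u • 1) + diagonal fun i => monod (m i) (a i) s := by
  rw [Bmat]
  abel

theorem isHermitian_smul_mutT_sub (n : ℕ) (u ε : ℝ) :
    (ε • mutT n - u • (1 : Matrix (Fin n) (Fin n) ℝ)).IsHermitian :=
  ((mutT_isHermitian n).smul (.all ε)).sub (isHermitian_one.smul (.all u))

theorem isHermitian_Bmat (n : ℕ) (m a : Fin n → ℝ) (s u ε : ℝ) :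
    (Bmat n m a s u ε).IsHermitian := by
  rw [Bmat_eq_add_diagonal]
  exact (isHermitian_smul_mutT_sub n u ε).add (isHermitian_diagonal _)

theorem Bmat_apply_nonneg (hε : 0 ≤ ε) : Pairwise fun i j => 0 ≤ Bmat n m a s u ε i j := by
  intro i j hij
  simpa [Bmat, diagonal_apply_ne _ hij, one_apply_ne hij] using
    mul_nonneg hε (mutT_apply_nonneg hij)

theorem strictMonoOn_maxEig_Bmat [NeZero n] (hm : ∀ i, 0 < m i) (ha : ∀ i, 0 < a i) :
    StrictMonoOn (fun s => maxEig (Bmat n m a s u ε)) (Ici 0) := by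
  intro s hs t ht hst
  have h := (isHermitian_Bmat n m a s u ε).maxEig_lt_add_diagonal
    fun i => sub_pos.2 (monod_strictMonoOn (hm i) (ha i) hs ht hst)
  simpa only [Bmat_eq_add_diagonal, add_assoc, diagonal_add, add_sub_cancel] using h

theorem continuousOn_maxEig_Bmat [NeZero n] (ha : ∀ i, 0 < a i) :
    ContinuousOn (fun s => maxEig (Bmat n m a s u ε)) (Ici 0) := by
  simp only [Bmat_eq_add_diagonal]
  exact (isHermitian_smul_mutT_sub n u ε).lipschitzWith_maxEig_add_diagonal.continuous
    |>.comp_continuousOn (continuousOn_pi.2 fun i => monod_continuousOn (ha i))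

theorem maxEig_Bmat_zero [NeZero n] (hε : 0 ≤ ε) : maxEig (Bmat n m a 0 u ε) = -u := by
  refine (isHermitian_Bmat n m a 0 u ε).maxEig_eq_of_pos_mulVec_eq_smul (Bmat_apply_nonneg hε)
    (x := 1) (fun _ => one_pos) ?_
  simp [Bmat_eq_add_diagonal, monod_zero, sub_mulVec, smul_mulVec, mutT_mulVec_one]

theorem eq_zero_of_Bmat_mulVec_eq_zero (hε : 0 < ε) {x : Fin n → ℝ} (hx : 0 ≤ x)
    (hBx : Bmat n m a s u ε *ᵥ x = 0) {i : Fin n} (hi : x i = 0) : x = 0 := by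
  cases n with
  | zero => exact Subsingleton.elim _ _
  | succ N =>
    have hoff := Bmat_apply_nonneg (m := m) (a := a) (s := s) (u := u) hε.le
    have hband : ∀ k : Fin N, 0 < Bmat (N + 1) m a s u ε k.castSucc k.succ ∧
        0 < Bmat (N + 1) m a s u ε k.succ k.castSucc := fun k => by
      have hne : k.castSucc ≠ k.succ := Fin.castSucc_lt_succ.ne
      simp [Bmat, diagonal_apply_ne _ hne, diagonal_apply_ne _ hne.symm, one_apply_ne hne,
        one_apply_ne hne.symm, mutT_castSucc_succ, mutT_succ_castSucc, hε]
    have hzero : ∀ j, x j = 0 ↔ x i = 0 := fun j =>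
      Fin.iff_of_forall_castSucc_iff_succ (p := fun j => x j = 0) (fun k =>
        ⟨fun h => eq_zero_of_mulVec_apply_eq_zero hoff hx (congrFun hBx _) h (hband k).1,
          fun h => eq_zero_of_mulVec_apply_eq_zero hoff hx (congrFun hBx _) h (hband k).2⟩) j i
    exact funext fun j => (hzero j).2 hi

theorem pos_of_Bmat_mulVec_eq_zero (hε : 0 < ε) {x : Fin n → ℝ} (hx : 0 ≤ x) (hx0 : x ≠ 0)
    (hBx : Bmat n m a s u ε *ᵥ x = 0) (i : Fin n) : 0 < x i :=
  (hx i).lt_of_ne' fun hi => hx0 (eq_zero_of_Bmat_mulVec_eq_zero hε hx hBx hi)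

theorem exists_pos_Bmat_mulVec_eq_zero [NeZero n] (hε : 0 < ε)
    (hmax : maxEig (Bmat n m a s u ε) = 0) {r : ℝ} (hr : 0 < r) :
    ∃ x : Fin n → ℝ, (∀ i, 0 < x i) ∧ Bmat n m a s u ε *ᵥ x = 0 ∧ ∑ j, x j = r := by
  obtain ⟨v, hv, hv0, hBv⟩ := (isHermitian_Bmat n m a s u ε).exists_nonneg_mulVec_eq_maxEig_smul
    (Bmat_apply_nonneg hε.le)
  rw [hmax, zero_smul] at hBv
  have hvpos := pos_of_Bmat_mulVec_eq_zero hε hv0 hv hBv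
  have hsum : 0 < ∑ j, v j := Finset.sum_pos (fun j _ => hvpos j) Finset.univ_nonempty
  refine ⟨(r / ∑ j, v j) • v, fun i => mul_pos (div_pos hr hsum) (hvpos i), ?_, ?_⟩
  · rw [mulVec_smul, hBv, smul_zero]
  · simp only [Pi.smul_apply, smul_eq_mul, ← Finset.mul_sum, div_mul_cancel₀ _ hsum.ne']

theorem eq_of_Bmat_mulVec_eq_zero [NeZero n] (hε : 0 < ε) {x y : Fin n → ℝ}
    (hx : ∀ i, 0 < x i) (hBx : Bmat n m a s u ε *ᵥ x = 0) (hBy : Bmat n m a s u ε *ᵥ y = 0)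
    (hsum : ∑ j, y j = ∑ j, x j) : y = x := by
  -- `c = min yⱼ / xⱼ` makes `y - c • x` a nonnegative kernel vector with a zero entry.
  obtain ⟨i, -, hi⟩ := Finset.exists_min_image Finset.univ (fun j => y j / x j)
    Finset.univ_nonempty
  set c := y i / x i
  have hBz : Bmat n m a s u ε *ᵥ (y - c • x) = 0 := by
    rw [mulVec_sub, mulVec_smul, hBx, hBy, smul_zero, sub_zero]
  have hz : y - c • x = 0 := by
    refine eq_zero_of_Bmat_mulVec_eq_zero hε (fun j => ?_) hBz (i := i) ?_
    · have := hi j (Finset.mem_univ _)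
      rw [div_le_div_iff₀ (hx i) (hx j)] at this
      simp only [Pi.zero_apply, Pi.sub_apply, Pi.smul_apply, smul_eq_mul, sub_nonneg, c,
        div_mul_eq_mul_div, div_le_iff₀ (hx i)]
      linarith
    · simp [c, div_mul_cancel₀ _ (hx i).ne']
  have hxsum : 0 < ∑ j, x j := Finset.sum_pos (fun j _ => hx j) Finset.univ_nonempty
  have hc : c = 1 := by
    have h := congrArg (fun z => ∑ j, z j) hz
    simp only [Pi.sub_apply, Pi.smul_apply, smul_eq_mul, Finset.sum_sub_distrib,
      ← Finset.mul_sum, hsum, Pi.zero_apply, Finset.sum_const_zero] at h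
    nlinarith
  rw [sub_eq_zero, hc, one_smul] at hz
  exact hz

theorem sum_Bmat_mulVec (x : Fin n → ℝ) :
    ∑ i, (Bmat n m a s u ε *ᵥ x) i = ∑ j, monod (m j) (a j) s * x j - u * ∑ j, x j := by
  simp only [Bmat, add_mulVec, sub_mulVec, smul_mulVec, one_mulVec, mulVec_diagonal,
    Pi.add_apply, Pi.sub_apply, Pi.smul_apply, smul_eq_mul, Finset.sum_add_distrib,
    Finset.sum_sub_distrib, ← Finset.mul_sum, sum_mutT_mulVec, mul_zero, add_zero]

theorem IsSteady.sum_add_eq_one (hu : u ≠ 0) {x : Fin n → ℝ} (h : IsSteady n m a ε u x s) :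
    ∑ j, x j + s = 1 := by
  obtain ⟨hBx, hμx⟩ := h
  have hsum := sum_Bmat_mulVec (m := m) (a := a) (s := s) (u := u) (ε := ε) x
  rw [hBx, hμx] at hsum
  simp only [Pi.zero_apply, Finset.sum_const_zero] at hsum
  have : u * (∑ j, x j + s - 1) = 0 := by linarith
  linarith [(mul_eq_zero.1 this).resolve_left hu]

end Chemostat

/-- if `λ(B(1,u,ε)) > 0` there is a unique `s* ∈ (0,1)` with `λ(B(s*,u,ε)) = 0`
and a unique positive `x*` with `B(s*,u,ε)x* = 0` and `Σ x*ⱼ + s* = 1`; the only steady states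
in `ℝ₊ⁿ × [0,1]` are the washout and `(x*, s*)`. -/
theorem stmt_6 (n : ℕ) (hn : 1 ≤ n) (m a : Fin n → ℝ)
    (hm : ∀ i, 0 < m i) (ha : ∀ i, 0 < a i)
    (ε u : ℝ) (hε : 0 < ε) (hu : 0 < u)
    (hpos : 0 < maxEig (Bmat n m a 1 u ε)) :
    ∃ sstar : ℝ, sstar ∈ Set.Ioo (0 : ℝ) 1 ∧ maxEig (Bmat n m a sstar u ε) = 0 ∧
      (∀ s' ∈ Set.Ioo (0 : ℝ) 1, maxEig (Bmat n m a s' u ε) = 0 → s' = sstar) ∧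
      ∃ xstar : Fin n → ℝ, (∀ i, 0 < xstar i) ∧
        (Bmat n m a sstar u ε).mulVec xstar = 0 ∧ (∑ j, xstar j) + sstar = 1 ∧
        (∀ x' : Fin n → ℝ, (∀ i, 0 < x' i) →
          (Bmat n m a sstar u ε).mulVec x' = 0 → (∑ j, x' j) + sstar = 1 → x' = xstar) ∧
        (∀ (x : Fin n → ℝ) (s : ℝ), (∀ i, 0 ≤ x i) → s ∈ Set.Icc (0 : ℝ) 1 →
          IsSteady n m a ε u x s → (x = 0 ∧ s = 1) ∨ (x = xstar ∧ s = sstar)) := by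
  have : NeZero n := ⟨by omega⟩
  obtain ⟨s₀, hs₀, hmax₀⟩ : ∃ s ∈ Set.Ioo (0 : ℝ) 1, maxEig (Bmat n m a s u ε) = 0 :=
    intermediate_value_Ioo zero_le_one ((continuousOn_maxEig_Bmat ha).mono Icc_subset_Ici_self)
      ⟨by rw [maxEig_Bmat_zero hε.le]; linarith, hpos⟩
  have hs_unique : ∀ s ∈ Ici (0 : ℝ), maxEig (Bmat n m a s u ε) = 0 → s = s₀ :=
    fun s hs hmax =>
      (strictMonoOn_maxEig_Bmat hm ha).injOn hs hs₀.1.le (hmax.trans hmax₀.symm)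
  obtain ⟨x₀, hx₀, hBx₀, hsum₀⟩ := exists_pos_Bmat_mulVec_eq_zero hε hmax₀ (sub_pos.2 hs₀.2)
  have hx_unique : ∀ x, Bmat n m a s₀ u ε *ᵥ x = 0 → ∑ j, x j + s₀ = 1 → x = x₀ :=
    fun x hBx hsum => eq_of_Bmat_mulVec_eq_zero hε hx₀ hBx₀ hBx (by linarith)
  refine ⟨s₀, hs₀, hmax₀, fun s hs => hs_unique s hs.1.le, x₀, hx₀, hBx₀, by linarith,
    fun x _ => hx_unique x, fun x s hx hs hsteady => ?_⟩
  have hsum := hsteady.sum_add_eq_one hu.ne'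
  obtain ⟨hBx, -⟩ := hsteady
  rcases eq_or_ne x 0 with rfl | hx0
  · left
    simpa using hsum
  · right
    obtain rfl : s = s₀ := hs_unique s hs.1 <|
      (isHermitian_Bmat n m a s u ε).maxEig_eq_of_pos_mulVec_eq_smul (Bmat_apply_nonneg hε.le)
        (pos_of_Bmat_mulVec_eq_zero hε hx hx0 hBx) (by rw [hBx, zero_smul])
    exact ⟨hx_unique x hBx hsum, rfl⟩
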